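/- In ℝ² with the Euclidean norm, let Ω₁ = {(u,v) : u ≤ 0 or v ≥ u²} and Ω₂ = {(u,v) : u ≤ 0 or v ≤ −u²}, and x̄ = (0,0). Then {Ω₁, Ω₂} is semiregular at x̄; in fact, for every ρ > 0, the point x_ρ = (−ρ, 0) satisfies B_ρ(x_ρ) ⊆ Ω₁ ∩ Ω₂, and hence x_ρ ∈ (Ω₁ − x₁) ∩ (Ω₂ − x₂) ∩ B_ρ(x̄) for all x₁, x₂ ∈ ρ𝔹. -/

import Mathlib

/-! Both sets contain the closed half-plane `u ≤ 0`, which contains the ball `B_ρ((-ρ, 0))`.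
For `‖x‖ ≤ ρ` the point `(-ρ, 0) + x` lies in that ball, so `y = (-ρ, 0)` witnesses
semiregularity with `α = δ = 1`. -/

open Metric

local notation "E" => EuclideanSpace ℝ (Fin 2)

/-- The vector `(a, b)` in `E`. -/
def vec (a b : ℝ) : E := WithLp.toLp 2 ![a, b]

/-- `[1]`-semiregularity of the pair `{Ω₁, Ω₂}` at `0`. -/
def SemiReg2 (Ω₁ Ω₂ : Set E) : Prop :=
  ∃ α > (0:ℝ), ∃ δ > (0:ℝ), ∀ ρ ∈ Set.Ioo (0:ℝ) δ, ∀ x₁ x₂ : E,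
    ‖x₁‖ ≤ α * ρ → ‖x₂‖ ≤ α * ρ →
    ∃ y ∈ Metric.closedBall (0:E) ρ, y + x₁ ∈ Ω₁ ∧ y + x₂ ∈ Ω₂

lemma norm_vec (a b : ℝ) : ‖vec a b‖ = √(a ^ 2 + b ^ 2) := by
  simp [vec, EuclideanSpace.norm_eq, Fin.sum_univ_two]

lemma PiLp.apply_le_add_of_mem_closedBall {p : ENNReal} [Fact (1 ≤ p)] {ι : Type*} [Fintype ι]
    {c x : PiLp p fun _ : ι => ℝ} {r : ℝ} (hx : x ∈ closedBall c r) (i : ι) :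
    x i ≤ c i + r := by
  have h : |x i - c i| ≤ r := (PiLp.dist_apply_le x c i).trans hx
  linarith [le_abs_self (x i - c i)]

lemma closedBall_vec_neg_subset (ρ : ℝ) : closedBall (vec (-ρ) 0) ρ ⊆ {p : E | p 0 ≤ 0} :=
  fun _ hp => by simpa [vec] using PiLp.apply_le_add_of_mem_closedBall hp 0

theorem semiReg_example3 :
    (∀ ρ > (0:ℝ), Metric.closedBall (vec (-ρ) 0) ρ ⊆
      {p : E | p 0 ≤ 0 ∨ (p 0) ^ 2 ≤ p 1} ∩ {p : E | p 0 ≤ 0 ∨ p 1 ≤ -(p 0) ^ 2}) ∧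
    (∀ ρ > (0:ℝ), ∀ x₁ x₂ : E, ‖x₁‖ ≤ ρ → ‖x₂‖ ≤ ρ →
      vec (-ρ) (0) + x₁ ∈ {p : E | p 0 ≤ 0 ∨ (p 0) ^ 2 ≤ p 1} ∧
      vec (-ρ) (0) + x₂ ∈ {p : E | p 0 ≤ 0 ∨ p 1 ≤ -(p 0) ^ 2} ∧
      vec (-ρ) (0) ∈ Metric.closedBall (0:E) ρ) ∧
    SemiReg2 {p : E | p 0 ≤ 0 ∨ (p 0) ^ 2 ≤ p 1} {p : E | p 0 ≤ 0 ∨ p 1 ≤ -(p 0) ^ 2} := by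
  have hball : ∀ ρ : ℝ, closedBall (vec (-ρ) 0) ρ ⊆
      {p : E | p 0 ≤ 0 ∨ (p 0) ^ 2 ≤ p 1} ∩ {p : E | p 0 ≤ 0 ∨ p 1 ≤ -(p 0) ^ 2} :=
    fun ρ p hp => ⟨Or.inl (closedBall_vec_neg_subset ρ hp), Or.inl (closedBall_vec_neg_subset ρ hp)⟩
  have hshift : ∀ ρ > (0:ℝ), ∀ x₁ x₂ : E, ‖x₁‖ ≤ ρ → ‖x₂‖ ≤ ρ →
      vec (-ρ) (0) + x₁ ∈ {p : E | p 0 ≤ 0 ∨ (p 0) ^ 2 ≤ p 1} ∧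
      vec (-ρ) (0) + x₂ ∈ {p : E | p 0 ≤ 0 ∨ p 1 ≤ -(p 0) ^ 2} ∧
      vec (-ρ) (0) ∈ Metric.closedBall (0:E) ρ := by
    intro ρ hρ x₁ x₂ h₁ h₂
    have hcenter : vec (-ρ) 0 ∈ closedBall (0:E) ρ := by
      simp [norm_vec, Real.sqrt_sq hρ.le]
    exact ⟨(hball ρ (add_mem_closedBall_iff_norm.2 h₁)).1,
      (hball ρ (add_mem_closedBall_iff_norm.2 h₂)).2, hcenter⟩
  refine ⟨fun ρ _ => hball ρ, hshift, 1, one_pos, 1, one_pos, fun ρ hρ x₁ x₂ h₁ h₂ => ?_⟩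
  rw [one_mul] at h₁ h₂
  obtain ⟨hx₁, hx₂, hcenter⟩ := hshift ρ hρ.1 x₁ x₂ h₁ h₂
  exact ⟨vec (-ρ) 0, hcenter, hx₁, hx₂⟩
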